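/- arXiv:1606.06633 — 2 statements merged into one kernel-verified Lean document; each statement's English description precedes it below -/
import Mathlib

section
/- Almost surely, sup_{t ∈ [h,T−h]} |ν̂²_ri − ν²| → 0 and sup_{t ∈ [h,T−h]} |ν̂²_le − ν²| → 0 as n → ∞. -/
open MeasureTheory ProbabilityTheory Filter Topology

/-- Partial sum `S_k = ξ_1 + ⋯ + ξ_k` of the life times (1-indexed), `S_0 = 0`. -/
noncomputable def pSum {Ω : Type*} (ξ : ℕ → Ω → ℝ) (k : ℕ) (ω : Ω) : ℝ :=
  ∑ i ∈ Finset.Icc 1 k, ξ i ω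

/-- Counting process `N_t = max {k ≥ 0 : S_k ≤ t}`. -/
noncomputable def cnt {Ω : Type*} (ξ : ℕ → Ω → ℝ) (t : ℝ) (ω : Ω) : ℕ :=
  sSup {k : ℕ | pSum ξ k ω ≤ t}

/-- Empirical mean `μ̂_t = (1/N_t) ∑_{i=1}^{N_t} ξ_i` of the life times up to time `t`
(equal to `0` by the division-by-zero convention if `N_t = 0`). -/
noncomputable def muHat {Ω : Type*} (ξ : ℕ → Ω → ℝ) (t : ℝ) (ω : Ω) : ℝ :=
  pSum ξ (cnt ξ t ω) ω / (cnt ξ t ω)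


/-- Globally estimated mean `μ̂_{nT}`. -/
noncomputable def muHatGlobal {Ω : Type*} (ξ : ℕ → Ω → ℝ) (T : ℝ) (n : ℕ) (ω : Ω) : ℝ :=
  muHat ξ ((n : ℝ) * T) ω

/-- Left window index set `Î_le = {N_{n(t−h)}+2, …, N_{nt}}`. -/
noncomputable def Ile {Ω : Type*} (ξ : ℕ → Ω → ℝ) (n : ℕ) (h t : ℝ) (ω : Ω) : Finset ℕ :=
  Finset.Icc (cnt ξ ((n : ℝ) * (t - h)) ω + 2) (cnt ξ ((n : ℝ) * t) ω)

/-- Right window index set `Î_ri = {N_{nt}+2, …, N_{n(t+h)}}`. -/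
noncomputable def Iri {Ω : Type*} (ξ : ℕ → Ω → ℝ) (n : ℕ) (h t : ℝ) (ω : Ω) : Finset ℕ :=
  Finset.Icc (cnt ξ ((n : ℝ) * t) ω + 2) (cnt ξ ((n : ℝ) * (t + h)) ω)

/-- `V̂_i = (ξ_i − μ̂_{nT})²`. -/
noncomputable def Vhat {Ω : Type*} (ξ : ℕ → Ω → ℝ) (T : ℝ) (n : ℕ) (i : ℕ) (ω : Ω) : ℝ :=
  (ξ i ω - muHatGlobal ξ T n ω) ^ 2

/-- Window variance estimator `σ̂² = (1/|s|) ∑_{i∈s} V̂_i`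
(`0` on an empty index set by the division-by-zero convention). -/
noncomputable def sigmaHatSqOn {Ω : Type*} (ξ : ℕ → Ω → ℝ) (T : ℝ) (n : ℕ) (s : Finset ℕ)
    (ω : Ω) : ℝ :=
  (∑ i ∈ s, Vhat ξ T n i ω) / s.card

/-- Window estimator `ν̂² = (1/|s|) ∑_{i∈s} (V̂_i − σ̂²)²`
(`0` on an empty index set by the division-by-zero convention). -/
noncomputable def nuHatSqOn {Ω : Type*} (ξ : ℕ → Ω → ℝ) (T : ℝ) (n : ℕ) (s : Finset ℕ)
    (ω : Ω) : ℝ :=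
  (∑ i ∈ s, (Vhat ξ T n i ω - sigmaHatSqOn ξ T n s ω) ^ 2) / s.card

/-- Empirical mean of the life times with indices in `s`
(`0` on an empty index set by the division-by-zero convention). -/
noncomputable def avgOn {Ω : Type*} (ξ : ℕ → Ω → ℝ) (s : Finset ℕ) (ω : Ω) : ℝ :=
  (∑ i ∈ s, ξ i ω) / s.card

/-!
By the strong law of large numbers, applied to `ξ_i` and to `(ξ_i - μ) ^ j` for `j ≤ 4`, almost
surely `S_k / k → μ` and the Cesàro means of `(ξ_i - μ) ^ j` converge to `E (ξ_1 - μ) ^ j`. The rest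
is deterministic. Inverting `S_k` gives the renewal estimate `μ N_t = t + o(t)`, uniformly in
`t ≥ 0`, so the windows `Î = (N_{nt} + 1, N_{n(t+h)}]` have length of order `n` uniformly in
`t ∈ [0, T - h]`, and the averages of a Cesàro-convergent sequence over such windows converge
uniformly. Expanding `(ξ_i - μ̂)^p = ((ξ_i - μ) + (μ - μ̂))^p` and using `μ̂_{nT} → μ`, the window
central moments of order 2 and 4 converge, and
`ν̂² = mean (ξ - μ̂)^4 - (mean (ξ - μ̂)^2)^2 → E (ξ_1 - μ)^4 - (E (ξ_1 - μ)^2)^2 = ν²`.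
-/

lemma exists_abs_sub_mul_le_of_tendsto_div {f : ℕ → ℝ} {m : ℝ}
    (hf : Tendsto (fun k : ℕ => f k / k) atTop (𝓝 m)) {ε : ℝ} (hε : 0 < ε) :
    ∃ C, ∀ k : ℕ, |f k - k * m| ≤ ε * k + C := by
  obtain ⟨K, hK⟩ := Metric.tendsto_atTop.1 hf ε hε
  refine ⟨∑ j ∈ Finset.range (K + 1), |f j - j * m|, fun k => ?_⟩
  rcases lt_or_ge k (K + 1) with hk | hk
  · have := Finset.single_le_sum (f := fun j : ℕ => |f j - j * m|) (fun _ _ => abs_nonneg _)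
      (Finset.mem_range.2 hk)
    have : 0 ≤ ε * k := by positivity
    linarith
  · have hk0 : (0 : ℝ) < k := by exact_mod_cast (show 0 < k by omega)
    have hdist : |f k / k - m| < ε := hK k (by omega)
    have : |f k - k * m| = k * |f k / k - m| := by
      rw [← abs_of_pos hk0, ← abs_mul, abs_of_pos hk0, mul_sub, mul_div_cancel₀ _ hk0.ne']
    have : 0 ≤ ∑ j ∈ Finset.range (K + 1), |f j - j * m| :=
      Finset.sum_nonneg fun _ _ => abs_nonneg _
    nlinarith

lemma sum_Icc_one_eq_sum_Ioc_zero (g : ℕ → ℝ) (k : ℕ) :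
    ∑ i ∈ Finset.Icc 1 k, g i = ∑ i ∈ Finset.Ioc 0 k, g i := by
  rw [← Finset.Icc_add_one_left_eq_Ioc, zero_add]

theorem tendsto_sum_Ioc_div_card {α : Type*} {L : Filter α} {g : ℕ → ℝ} {m : ℝ}
    (hg : Tendsto (fun k : ℕ => (∑ i ∈ Finset.Icc 1 k, g i) / k) atTop (𝓝 m))
    {p q : α → ℕ} (hgrow : Tendsto (fun x => (q x : ℝ) - p x) L atTop)
    (hO : (fun x => (q x : ℝ)) =O[L] fun x => (q x : ℝ) - p x) :
    Tendsto (fun x => (∑ i ∈ Finset.Ioc (p x) (q x), g i) / (Finset.Ioc (p x) (q x)).card) L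
      (𝓝 m) := by
  set A : ℕ → ℝ := fun k => ∑ i ∈ Finset.Icc 1 k, g i
  obtain ⟨c, hc, hcO⟩ := hO.exists_pos
  rw [Metric.tendsto_nhds]
  intro δ hδ
  obtain ⟨C, hC⟩ := exists_abs_sub_mul_le_of_tendsto_div hg (ε := δ / (4 * c)) (by positivity)
  filter_upwards [hcO.bound, hgrow.eventually_gt_atTop (max 0 (4 * C / δ))] with x hqx hdx
  set a := p x
  set b := q x
  have hd : (0 : ℝ) < b - a := lt_of_le_of_lt (le_max_left _ _) hdx
  have hCd : 4 * C < δ * (b - a) := by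
    have := (div_lt_iff₀' hδ).1 (lt_of_le_of_lt (le_max_right _ _) hdx); linarith
  have hab : a ≤ b := by exact_mod_cast (sub_pos.1 hd).le
  have hcard : ((Finset.Ioc a b).card : ℝ) = b - a := by
    rw [Nat.card_Ioc, Nat.cast_sub hab]
  have hsum : ∑ i ∈ Finset.Ioc a b, g i = A b - A a := by
    simp only [A, sum_Icc_one_eq_sum_Ioc_zero]
    rw [← Finset.sum_Ioc_consecutive _ (Nat.zero_le a) hab, add_sub_cancel_left]
  have hbound : |(A b - b * m) - (A a - a * m)| < δ * (b - a) := by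
    have hq : (b : ℝ) ≤ c * (b - a) := by
      simpa [Real.norm_eq_abs, abs_of_pos hd] using hqx
    have hpb : (a : ℝ) ≤ b := by exact_mod_cast hab
    have hε : 0 ≤ δ / (4 * c) := by positivity
    calc |(A b - b * m) - (A a - a * m)|
        ≤ (δ / (4 * c) * b + C) + (δ / (4 * c) * a + C) :=
          (abs_sub _ _).trans (add_le_add (hC b) (hC a))
      _ ≤ δ / (4 * c) * (2 * (c * (b - a))) + 2 * C := by
          nlinarith [mul_le_mul_of_nonneg_left hpb hε, mul_le_mul_of_nonneg_left hq hε]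
      _ < δ * (b - a) := by
          rw [show δ / (4 * c) * (2 * (c * (b - a))) = δ * (b - a) / 2 by field_simp; ring]
          linarith
  rw [Real.dist_eq, hsum, hcard, show (A b - A a) / (b - a) - m =
    ((A b - b * m) - (A a - a * m)) / (b - a) by field_simp; ring, abs_div, abs_of_pos hd,
    div_lt_iff₀ hd]
  exact hbound

lemma sum_add_pow_div_card (s : Finset ℕ) (y : ℕ → ℝ) (c : ℝ) (p : ℕ) :
    (∑ i ∈ s, (y i + c) ^ p) / s.card =
      ∑ j ∈ Finset.range (p + 1), (∑ i ∈ s, y i ^ j) / s.card * c ^ (p - j) * p.choose j := by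
  simp only [add_pow, Finset.sum_div, Finset.sum_mul]
  rw [Finset.sum_comm]
  refine Finset.sum_congr rfl fun j _ => Finset.sum_congr rfl fun i _ => ?_
  ring

theorem tendsto_sum_add_pow_div_card {α : Type*} {L : Filter α} {s : α → Finset ℕ}
    {y : ℕ → ℝ} {δ : α → ℝ} {κ : ℕ → ℝ} {p : ℕ} (hδ : Tendsto δ L (𝓝 0))
    (hy : ∀ j ≤ p, Tendsto (fun x => (∑ i ∈ s x, y i ^ j) / (s x).card) L (𝓝 (κ j))) :
    Tendsto (fun x => (∑ i ∈ s x, (y i + δ x) ^ p) / (s x).card) L (𝓝 (κ p)) := by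
  have hlim : ∑ j ∈ Finset.range (p + 1), κ j * 0 ^ (p - j) * p.choose j = κ p := by
    rw [Finset.sum_range_succ, Finset.sum_eq_zero fun j hj => by
      rw [zero_pow (by have := Finset.mem_range.1 hj; omega)]; ring]
    simp
  simp only [sum_add_pow_div_card]
  rw [← hlim]
  refine tendsto_finsetSum _ fun j hj => ?_
  exact ((hy j (Nat.lt_succ_iff.1 (Finset.mem_range.1 hj))).mul (hδ.pow _)).mul_const _

lemma sum_sub_sum_div_card_sq_div_card (s : Finset ℕ) (v : ℕ → ℝ) :
    (∑ i ∈ s, (v i - (∑ j ∈ s, v j) / s.card) ^ 2) / s.card =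
      (∑ i ∈ s, v i ^ 2) / s.card - ((∑ i ∈ s, v i) / s.card) ^ 2 := by
  rcases s.eq_empty_or_nonempty with rfl | hs
  · simp
  have hcard : (s.card : ℝ) ≠ 0 := by exact_mod_cast hs.card_pos.ne'
  simp only [sub_sq, Finset.sum_add_distrib, Finset.sum_sub_distrib, ← Finset.sum_mul,
    ← Finset.mul_sum, Finset.sum_const, nsmul_eq_mul]
  field_simp
  ring

section CountingProcess

variable {Ω : Type*} (ξ : ℕ → Ω → ℝ) (ω : Ω)

lemma pSum_zero : pSum ξ 0 ω = 0 := by simp [pSum]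

variable {ξ ω} (hS : Tendsto (fun k => pSum ξ k ω) atTop atTop)
include hS

lemma bddAbove_pSum_le (t : ℝ) : BddAbove {k | pSum ξ k ω ≤ t} := by
  obtain ⟨K, hK⟩ := eventually_atTop.1 (hS.eventually_gt_atTop t)
  exact ⟨K, fun k hk => not_lt.1 fun hlt => (hK k hlt.le).not_ge hk⟩

lemma le_cnt {t : ℝ} {k : ℕ} (hk : pSum ξ k ω ≤ t) : k ≤ cnt ξ t ω :=
  le_csSup (bddAbove_pSum_le hS t) hk

lemma pSum_cnt_le {t : ℝ} (ht : 0 ≤ t) : pSum ξ (cnt ξ t ω) ω ≤ t :=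
  Nat.sSup_mem ⟨0, by simpa [pSum_zero] using ht⟩ (bddAbove_pSum_le hS t)

lemma lt_pSum_cnt_add_one (t : ℝ) : t < pSum ξ (cnt ξ t ω + 1) ω :=
  not_le.1 fun hle => (le_cnt hS hle).not_gt (Nat.lt_succ_self _)

lemma tendsto_cnt_atTop : Tendsto (fun t => cnt ξ t ω) atTop atTop :=
  tendsto_atTop_atTop.2 fun k => ⟨pSum ξ k ω, fun _ ht => le_cnt hS ht⟩

end CountingProcess

section Renewal

variable {Ω : Type*} {ξ : ℕ → Ω → ℝ} {ω : Ω} {μ : ℝ}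
  (hS : Tendsto (fun k : ℕ => pSum ξ k ω / k) atTop (𝓝 μ)) (hμ : 0 < μ)
include hS hμ

lemma tendsto_pSum_atTop : Tendsto (fun k => pSum ξ k ω) atTop atTop := by
  refine (hS.pos_mul_atTop hμ tendsto_natCast_atTop_atTop).congr' ?_
  filter_upwards [eventually_ne_atTop 0] with k hk
  exact div_mul_cancel₀ _ (Nat.cast_ne_zero.2 hk)

lemma exists_abs_mul_cnt_sub_le {ε : ℝ} (hε : 0 < ε) :
    ∃ C, ∀ t, 0 ≤ t → |μ * cnt ξ t ω - t| ≤ ε * t + C := by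
  set ε' := min (μ / 2) (ε * μ / 2)
  have hε' : 0 < ε' := lt_min (by positivity) (by positivity)
  obtain ⟨C, hC⟩ := exists_abs_sub_mul_le_of_tendsto_div hS hε'
  refine ⟨(ε + 1) * C + μ + ε', fun t ht => ?_⟩
  have hN := hC (cnt ξ t ω)
  have hN1 := hC (cnt ξ t ω + 1)
  have hle := pSum_cnt_le (tendsto_pSum_atTop hS hμ) ht
  have hlt := lt_pSum_cnt_add_one (tendsto_pSum_atTop hS hμ) t
  set N : ℝ := (cnt ξ t ω : ℝ)
  push_cast at hN1
  have hN0 : 0 ≤ N := Nat.cast_nonneg _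
  have hε'μ : ε' ≤ μ / 2 := min_le_left _ _
  have hε'ε : ε' ≤ ε * μ / 2 := min_le_right _ _
  have hμN : μ * N / 2 ≤ t + C := by
    nlinarith [(abs_le.1 hN).1, mul_le_mul_of_nonneg_right hε'μ hN0]
  have hε'N : ε' * N ≤ ε * (t + C) := by
    nlinarith [mul_le_mul_of_nonneg_right hε'ε hN0]
  rw [abs_le]
  constructor <;> nlinarith [abs_le.1 hN, abs_le.1 hN1]

end Renewal

section Window

variable {Ω : Type*} {ξ : ℕ → Ω → ℝ} {ω : Ω} {μ T h : ℝ}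
  (hS : Tendsto (fun k : ℕ => pSum ξ k ω / k) atTop (𝓝 μ)) (hμ : 0 < μ)
  (hT : 0 < T) (hh : 0 < h)
include hS hμ hT hh

lemma eventually_cnt_window_bounds : ∃ C, ∀ᶠ x : ℕ × ℝ in atTop ×ˢ 𝓟 (Set.Icc 0 (T - h)),
    μ * cnt ξ (x.1 * (x.2 + h)) ω ≤ 2 * x.1 * T + C ∧
    x.1 * h / 2 - C ≤ μ * ((cnt ξ (x.1 * (x.2 + h)) ω : ℝ) - (cnt ξ (x.1 * x.2) ω + 1 : ℕ)) := by
  -- with `ε = h / (4T)` the renewal error over `[0, nT]` is at most a quarter of the window `nh`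
  set ε := h / (4 * T) with hεdef
  have hε : 0 < ε := by positivity
  obtain ⟨C, hC⟩ := exists_abs_mul_cnt_sub_le hS hμ hε
  refine ⟨2 * C + μ, (eventually_principal.2 fun u hu => hu).prod_inr _ |>.mono ?_⟩
  rintro ⟨n, u⟩ ⟨hu0, huT⟩
  have hn : (0 : ℝ) ≤ n := Nat.cast_nonneg n
  have hnu : 0 ≤ n * u := mul_nonneg hn hu0
  have hnuh : n * (u + h) ≤ n * T := mul_le_mul_of_nonneg_left (by linarith) hn
  have hεnT : ε * (n * T) = n * h / 4 := by rw [hεdef]; field_simp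
  have hε1 : ε ≤ 1 := by rw [div_le_one (by positivity)]; linarith
  have hu := abs_le.1 (hC _ hnu)
  have huh := abs_le.1 (hC (n * (u + h)) (by nlinarith))
  have hεnuh := mul_le_mul_of_nonneg_left hnuh hε.le
  have hεnu := mul_le_mul_of_nonneg_left (show n * u ≤ n * T by nlinarith) hε.le
  push_cast
  constructor <;> nlinarith [mul_le_mul_of_nonneg_right hε1 (by positivity : 0 ≤ n * T)]

lemma tendsto_cnt_window_sub :
    Tendsto (fun x : ℕ × ℝ =>
        (cnt ξ (x.1 * (x.2 + h)) ω : ℝ) - (cnt ξ (x.1 * x.2) ω + 1 : ℕ))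
      (atTop ×ˢ 𝓟 (Set.Icc 0 (T - h))) atTop := by
  obtain ⟨C, hC⟩ := eventually_cnt_window_bounds hS hμ hT hh
  have hlin : Tendsto (fun n : ℕ => (n * h / 2 - C) / μ) atTop atTop :=
    ((tendsto_atTop_add_const_right _ (-C) (tendsto_natCast_atTop_atTop.atTop_mul_const
      (by positivity : 0 < h / 2))).atTop_div_const hμ).congr fun n => by ring
  refine tendsto_atTop_mono' _ (hC.mono fun x hx => ?_) (hlin.comp tendsto_fst)
  rw [Function.comp_apply, div_le_iff₀' hμ]
  exact hx.2

lemma cnt_window_isBigO :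
    (fun x : ℕ × ℝ => (cnt ξ (x.1 * (x.2 + h)) ω : ℝ)) =O[atTop ×ˢ 𝓟 (Set.Icc 0 (T - h))]
      fun x => (cnt ξ (x.1 * (x.2 + h)) ω : ℝ) - (cnt ξ (x.1 * x.2) ω + 1 : ℕ) := by
  obtain ⟨C, hC⟩ := eventually_cnt_window_bounds hS hμ hT hh
  have hlarge : ∀ᶠ x : ℕ × ℝ in atTop ×ˢ 𝓟 (Set.Icc 0 (T - h)), 4 * C ≤ x.1 * h :=
    tendsto_fst.eventually
      ((tendsto_natCast_atTop_atTop.atTop_mul_const hh).eventually_ge_atTop (4 * C))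
  refine .of_bound (8 * T / h + 1) ?_
  filter_upwards [hC, hlarge] with x ⟨hb, hd⟩ hxC
  set d := (cnt ξ (x.1 * (x.2 + h)) ω : ℝ) - (cnt ξ (x.1 * x.2) ω + 1 : ℕ)
  have hd0 : x.1 * h / 4 ≤ μ * d := by linarith
  have hK : 2 * x.1 * T + C ≤ (8 * T / h + 1) * (x.1 * h / 4) := by
    rw [show (8 * T / h + 1) * (x.1 * h / 4) = 2 * x.1 * T + x.1 * h / 4 by field_simp; ring]
    linarith
  rw [Real.norm_of_nonneg (Nat.cast_nonneg _), Real.norm_of_nonneg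
    (nonneg_of_mul_nonneg_right (by nlinarith [Nat.cast_nonneg (α := ℝ) x.1]) hμ)]
  refine le_of_mul_le_mul_left ?_ hμ
  nlinarith [mul_le_mul_of_nonneg_left hd0 (by positivity : (0 : ℝ) ≤ 8 * T / h + 1)]

end Window

lemma tendsto_muHatGlobal {Ω : Type*} {ξ : ℕ → Ω → ℝ} {ω : Ω} {μ T : ℝ}
    (hS : Tendsto (fun k : ℕ => pSum ξ k ω / k) atTop (𝓝 μ)) (hμ : 0 < μ) (hT : 0 < T) :
    Tendsto (fun n : ℕ => muHatGlobal ξ T n ω) atTop (𝓝 μ) :=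
  hS.comp ((tendsto_cnt_atTop (tendsto_pSum_atTop hS hμ)).comp
    (tendsto_natCast_atTop_atTop.atTop_mul_const hT))

lemma nuHatSqOn_eq {Ω : Type*} (ξ : ℕ → Ω → ℝ) (T : ℝ) (n : ℕ) (s : Finset ℕ) (ω : Ω) :
    nuHatSqOn ξ T n s ω = (∑ i ∈ s, (ξ i ω - muHatGlobal ξ T n ω) ^ 4) / s.card -
      ((∑ i ∈ s, (ξ i ω - muHatGlobal ξ T n ω) ^ 2) / s.card) ^ 2 := by
  simp only [nuHatSqOn, sigmaHatSqOn, sum_sub_sum_div_card_sq_div_card, Vhat, ← pow_mul]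

lemma Iri_eq_Ioc {Ω : Type*} (ξ : ℕ → Ω → ℝ) (n : ℕ) (h t : ℝ) (ω : Ω) :
    Iri ξ n h t ω = Finset.Ioc (cnt ξ (n * t) ω + 1) (cnt ξ (n * (t + h)) ω) :=
  Finset.Icc_add_one_left_eq_Ioc _ _

lemma Ile_eq_Iri_sub {Ω : Type*} (ξ : ℕ → Ω → ℝ) (n : ℕ) (h t : ℝ) (ω : Ω) :
    Ile ξ n h t ω = Iri ξ n h (t - h) ω := by
  rw [Ile, Iri, sub_add_cancel]

theorem tendstoUniformlyOn_nuHatSqOn_Iri {Ω : Type*} {ξ : ℕ → Ω → ℝ} {ω : Ω} {μ T h : ℝ}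
    (hS : Tendsto (fun k : ℕ => pSum ξ k ω / k) atTop (𝓝 μ)) (hμ : 0 < μ)
    (hT : 0 < T) (hh : 0 < h) {κ : ℕ → ℝ}
    (hκ : ∀ j ≤ 4,
      Tendsto (fun k : ℕ => (∑ i ∈ Finset.Icc 1 k, (ξ i ω - μ) ^ j) / k) atTop (𝓝 (κ j))) :
    TendstoUniformlyOn (fun (n : ℕ) (t : ℝ) => nuHatSqOn ξ T n (Iri ξ n h t ω) ω)
      (fun _ => κ 4 - κ 2 ^ 2) atTop (Set.Icc 0 (T - h)) := by
  rw [← tendsto_prod_principal_iff]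
  have hwindow : ∀ j ≤ 4, Tendsto (fun x : ℕ × ℝ =>
      (∑ i ∈ Iri ξ x.1 h x.2 ω, (ξ i ω - μ) ^ j) / (Iri ξ x.1 h x.2 ω).card)
      (atTop ×ˢ 𝓟 (Set.Icc 0 (T - h))) (𝓝 (κ j)) := fun j hj => by
    simpa only [Iri_eq_Ioc] using tendsto_sum_Ioc_div_card (hκ j hj)
      (tendsto_cnt_window_sub hS hμ hT hh) (cnt_window_isBigO hS hμ hT hh)
  have hshift : Tendsto (fun x : ℕ × ℝ => μ - muHatGlobal ξ T x.1 ω)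
      (atTop ×ˢ 𝓟 (Set.Icc 0 (T - h))) (𝓝 0) := by
    simpa [Function.comp_def] using ((tendsto_muHatGlobal hS hμ hT).const_sub μ).comp tendsto_fst
  have hcentral : ∀ p ≤ 4, Tendsto (fun x : ℕ × ℝ =>
      (∑ i ∈ Iri ξ x.1 h x.2 ω, (ξ i ω - muHatGlobal ξ T x.1 ω) ^ p) / (Iri ξ x.1 h x.2 ω).card)
      (atTop ×ˢ 𝓟 (Set.Icc 0 (T - h))) (𝓝 (κ p)) := fun p hp => by
    simpa only [sub_add_sub_cancel] using
      tendsto_sum_add_pow_div_card hshift fun j hj => hwindow j (hj.trans hp)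
  simpa only [Function.HasUncurry.uncurry, id, nuHatSqOn_eq] using
    (hcentral 4 le_rfl).sub ((hcentral 2 (by norm_num)).pow 2)

lemma ae_tendsto_sum_Icc_div {Ω : Type*} [MeasurableSpace Ω] {P : Measure Ω} (X : ℕ → Ω → ℝ)
    (hint : Integrable (X 1) P) (hindep : Pairwise fun i j => IndepFun (X i) (X j) P)
    (hident : ∀ i, IdentDistrib (X i) (X 1) P P) :
    ∀ᵐ ω ∂P, Tendsto (fun k : ℕ => (∑ i ∈ Finset.Icc 1 k, X i ω) / k) atTop
      (𝓝 (∫ ω, X 1 ω ∂P)) := by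
  filter_upwards [strong_law_ae_real (fun i => X (i + 1)) hint
    (fun i j hij => hindep (by simpa using hij)) (fun i => hident (i + 1))] with ω hω
  convert hω using 3 with k
  rw [Finset.range_eq_Ico, Finset.sum_Ico_add' (fun i => X i ω)]
  rfl

lemma integrable_pow_of_memLp {Ω : Type*} [MeasurableSpace Ω] {P : Measure Ω}
    [IsFiniteMeasure P] {f : Ω → ℝ} {p : ℕ} (hf : MemLp f p P) :
    Integrable (fun ω => f ω ^ p) P :=
  hf.integrable_norm_pow'.mono' (hf.aestronglyMeasurable.pow p)
    (.of_forall fun ω => by simp [norm_pow])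

lemma variance_sq_eq_of_memLp {Ω : Type*} [MeasurableSpace Ω] {P : Measure Ω}
    [IsProbabilityMeasure P] {f : Ω → ℝ} (hf : MemLp f 4 P) :
    variance (fun ω => f ω ^ 2) P = ∫ ω, f ω ^ 4 ∂P - (∫ ω, f ω ^ 2 ∂P) ^ 2 := by
  have h4 : Integrable (fun ω => (f ω ^ 2) ^ 2) P := by
    simpa only [← pow_mul] using integrable_pow_of_memLp hf
  have hL2 : MemLp (fun ω => f ω ^ 2) 2 P :=
    (memLp_two_iff_integrable_sq (hf.aestronglyMeasurable.pow 2)).2 h4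
  rw [variance_eq_sub hL2]
  simp only [Pi.pow_apply, ← pow_mul]

theorem nuHatSq_tendstoUniformlyOn_ae_general
    {Ω : Type*} [MeasurableSpace Ω] (P : Measure Ω) [IsProbabilityMeasure P]
    (ξ : ℕ → Ω → ℝ)
    (hindep : iIndepFun ξ P)
    (hident : ∀ i, IdentDistrib (ξ i) (ξ 1) P P)
    (hL4 : MemLp (ξ 1) 4 P)
    (μ : ℝ) (hμ : μ = ∫ ω, ξ 1 ω ∂P) (hμpos : 0 < μ)
    (ν2 : ℝ) (hν2 : ν2 = variance (fun ω => (ξ 1 ω - μ) ^ 2) P)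
    (T h : ℝ) (hT : 0 < T) (hh : 0 < h) :
    ∀ᵐ ω ∂P,
      TendstoUniformlyOn (fun (n : ℕ) (t : ℝ) => nuHatSqOn ξ T n (Iri ξ n h t ω) ω)
        (fun _ => ν2) atTop (Set.Icc h (T - h)) ∧
      TendstoUniformlyOn (fun (n : ℕ) (t : ℝ) => nuHatSqOn ξ T n (Ile ξ n h t ω) ω)
        (fun _ => ν2) atTop (Set.Icc h (T - h)) := by
  set κ : ℕ → ℝ := fun j => ∫ ω, (ξ 1 ω - μ) ^ j ∂P
  have hcentered : MemLp (fun ω => ξ 1 ω - μ) 4 P := hL4.sub (memLp_const μ)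
  have hmean : ∀ᵐ ω ∂P, Tendsto (fun k : ℕ => pSum ξ k ω / k) atTop (𝓝 μ) :=
    hμ ▸ ae_tendsto_sum_Icc_div ξ (hL4.integrable (by norm_num))
      (fun i j hij => hindep.indepFun hij) hident
  have hmoments : ∀ᵐ ω ∂P, ∀ j ∈ Set.Iic 4, Tendsto
      (fun k : ℕ => (∑ i ∈ Finset.Icc 1 k, (ξ i ω - μ) ^ j) / k) atTop (𝓝 (κ j)) := by
    refine (ae_ball_iff (Set.finite_Iic 4).countable).2 fun j hj => ?_
    have hφ : Measurable fun x : ℝ => (x - μ) ^ j := by fun_prop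
    exact ae_tendsto_sum_Icc_div (fun i ω => (ξ i ω - μ) ^ j)
      (integrable_pow_of_memLp (hcentered.mono_exponent (by exact_mod_cast hj)))
      (fun i i' hii' => (hindep.indepFun hii').comp hφ hφ) (fun i => (hident i).comp hφ)
  filter_upwards [hmean, hmoments] with ω hω hωm
  have hwindow := hν2 ▸ (variance_sq_eq_of_memLp hcentered).symm ▸
    tendstoUniformlyOn_nuHatSqOn_Iri hω hμpos hT hh hωm
  refine ⟨hwindow.mono (Set.Icc_subset_Icc_left hh.le), ?_⟩
  simp only [Ile_eq_Iri_sub]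
  exact (hwindow.comp (· - h)).mono fun t ht => ⟨by linarith [ht.1], by linarith [ht.2]⟩

/-- almost surely, `sup_{t ∈ [h,T−h]} |ν̂²_ri − ν²| → 0` and
`sup_{t ∈ [h,T−h]} |ν̂²_le − ν²| → 0` as `n → ∞` (stated as a.s. uniform convergence
on `[h, T−h]`). -/
theorem nuHatSq_tendstoUniformlyOn_ae
    {Ω : Type*} [MeasurableSpace Ω] (P : Measure Ω) [IsProbabilityMeasure P]
    (ξ : ℕ → Ω → ℝ) (hmeas : ∀ i, Measurable (ξ i))
    (hindep : iIndepFun ξ P)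
    (hident : ∀ i, IdentDistrib (ξ i) (ξ 1) P P)
    (hpos : ∀ i, ∀ᵐ ω ∂P, 0 < ξ i ω)
    (hL4 : MemLp (ξ 1) 4 P)
    (μ : ℝ) (hμ : μ = ∫ ω, ξ 1 ω ∂P) (hμpos : 0 < μ)
    (ν2 : ℝ) (hν2 : ν2 = variance (fun ω => (ξ 1 ω - μ) ^ 2) P)
    (T h : ℝ) (hT : 0 < T) (hh : 0 < h) (hhT : h ≤ T / 2) :
    ∀ᵐ ω ∂P,
      TendstoUniformlyOn (fun (n : ℕ) (t : ℝ) => nuHatSqOn ξ T n (Iri ξ n h t ω) ω)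
        (fun _ => ν2) atTop (Set.Icc h (T - h)) ∧
      TendstoUniformlyOn (fun (n : ℕ) (t : ℝ) => nuHatSqOn ξ T n (Ile ξ n h t ω) ω)
        (fun _ => ν2) atTop (Set.Icc h (T - h)) :=
  nuHatSq_tendstoUniformlyOn_ae_general P ξ hindep hident hL4 μ hμ hμpos ν2 hν2 T h hT hh
end

section
/- For a renewal process with constant rate: almost surely, sup_{t ∈ [h,T−h]} |(N_{n(t+h)} − N_{nt})/(nh/μ) − 1| → 0 and sup_{t ∈ [h,T−h]} |(N_{nt} − N_{n(t−h)})/(nh/μ) − 1| → 0 as n → ∞. -/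
/-!
By the strong law of large numbers, almost surely `S_k / k → μ`. On such a path the sandwich
`S_{N_x} ≤ x < S_{N_x + 1}` gives `N_x / x → 1 / μ`. A monotone `g ≥ 0` with `g x / x → c`
satisfies `|g x - c x| ≤ η x + C_η` for every `η > 0`, so `g (n t) / n → c t` uniformly for `t`
in a compact interval; each window count is the difference of two such terms, evaluated at
times `h` apart.
-/

open MeasureTheory ProbabilityTheory Filter Topology

open Set

section RenewalCount

noncomputable def renewalCount (S : ℕ → ℝ) (x : ℝ) : ℕ :=
  sSup {k | S k ≤ x}

variable {S : ℕ → ℝ}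

lemma bddAbove_setOf_apply_le (hS : Tendsto S atTop atTop) (x : ℝ) :
    BddAbove {k | S k ≤ x} := by
  obtain ⟨N, hN⟩ := (hS.eventually_gt_atTop x).exists_forall_of_atTop
  exact ⟨N, fun k hk => not_lt.1 fun hNk => (hN k hNk.le).not_ge hk⟩

lemma le_renewalCount (hS : Tendsto S atTop atTop) {k : ℕ} {x : ℝ} (hk : S k ≤ x) :
    k ≤ renewalCount S x :=
  le_csSup (bddAbove_setOf_apply_le hS x) hk

lemma apply_renewalCount_le (hS : Tendsto S atTop atTop) {k : ℕ} {x : ℝ} (hk : S k ≤ x) :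
    S (renewalCount S x) ≤ x :=
  Nat.sSup_mem ⟨k, hk⟩ (bddAbove_setOf_apply_le hS x)

lemma lt_apply_renewalCount_succ (hS : Tendsto S atTop atTop) (x : ℝ) :
    x < S (renewalCount S x + 1) :=
  not_le.1 fun h => (le_renewalCount hS h).not_gt (Nat.lt_succ_self _)

lemma renewalCount_monotone (hS : Tendsto S atTop atTop) : Monotone (renewalCount S) :=
  fun _ y hxy => csSup_le_csSup' (bddAbove_setOf_apply_le hS y) fun _ hk => le_trans hk hxy

lemma tendsto_renewalCount_atTop (hS : Tendsto S atTop atTop) :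
    Tendsto (renewalCount S) atTop atTop :=
  tendsto_atTop.2 fun k => (eventually_ge_atTop (S k)).mono fun _ => le_renewalCount hS

theorem tendsto_renewalCount_div {μ : ℝ} (hμ : 0 < μ)
    (hSμ : Tendsto (fun k : ℕ => S k / k) atTop (𝓝 μ)) :
    Tendsto (fun x => (renewalCount S x : ℝ) / x) atTop (𝓝 μ⁻¹) := by
  have hS : Tendsto S atTop atTop := tendsto_natCast_atTop_atTop.num hμ hSμ
  have hN := tendsto_renewalCount_atTop hS
  have hsucc : Tendsto (fun k : ℕ => S (k + 1) / k) atTop (𝓝 μ) := by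
    have := (hSμ.comp (tendsto_add_atTop_nat 1)).mul
      ((tendsto_natCast_div_add_atTop (1 : ℝ)).inv₀ one_ne_zero)
    rw [inv_one, mul_one] at this
    refine this.congr' ((eventually_ne_atTop 0).mono fun k hk => ?_)
    have hk : (k : ℝ) ≠ 0 := Nat.cast_ne_zero.2 hk
    simp only [Function.comp_apply, Nat.cast_add, Nat.cast_one]
    field_simp
  have hx : Tendsto (fun x => x / renewalCount S x) atTop (𝓝 μ) := by
    refine tendsto_of_tendsto_of_tendsto_of_le_of_le' (hSμ.comp hN) (hsucc.comp hN) ?_ ?_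
    · filter_upwards [eventually_ge_atTop (S 0)] with x hx
      exact div_le_div_of_nonneg_right (apply_renewalCount_le hS hx) (Nat.cast_nonneg _)
    · exact Eventually.of_forall fun x =>
        div_le_div_of_nonneg_right (lt_apply_renewalCount_succ hS x).le (Nat.cast_nonneg _)
  simpa only [inv_div] using hx.inv₀ hμ.ne'

lemma cnt_eq_renewalCount {Ω : Type*} (ξ : ℕ → Ω → ℝ) (t : ℝ) (ω : Ω) :
    cnt ξ t ω = renewalCount (fun k => pSum ξ k ω) t :=
  rfl

end RenewalCount

section UniformScaling

variable {g : ℝ → ℝ} {c : ℝ}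

/-- The ratio controls `g` for large `x`; monotonicity bounds it on the remaining compact
interval. -/
lemma exists_abs_sub_mul_le_of_tendsto_div_s18 (hg : Monotone g) (hg0 : 0 ≤ g 0)
    (hlim : Tendsto (fun x => g x / x) atTop (𝓝 c)) {η : ℝ} (hη : 0 < η) :
    ∃ C, ∀ x, 0 ≤ x → |g x - c * x| ≤ η * x + C := by
  obtain ⟨X, hX⟩ := ((hlim.eventually (Metric.ball_mem_nhds c hη)).and
    (eventually_gt_atTop 0)).exists_forall_of_atTop
  have hX0 : 0 < X := (hX X le_rfl).2
  have hC : 0 ≤ g X + |c| * X := add_nonneg (hg0.trans (hg hX0.le)) (by positivity)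
  refine ⟨g X + |c| * X, fun x hx => ?_⟩
  rcases le_or_gt X x with hXx | hxX
  · obtain ⟨hdist, hxpos⟩ := hX x hXx
    have hsplit : g x - c * x = (g x / x - c) * x := by field_simp
    rw [hsplit, abs_mul, abs_of_pos hxpos]
    nlinarith [show |g x / x - c| < η from hdist]
  · calc |g x - c * x| ≤ |g x| + |c| * x := by
          simpa [abs_mul, abs_of_nonneg hx] using abs_sub (g x) (c * x)
      _ ≤ g X + |c| * X := by
          rw [abs_of_nonneg (hg0.trans (hg hx))]
          gcongr
          exact hg hxX.le
      _ ≤ η * x + (g X + |c| * X) := by nlinarith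

theorem tendstoUniformlyOn_div_natCast_of_tendsto_div (hg : Monotone g) (hg0 : 0 ≤ g 0)
    (hlim : Tendsto (fun x => g x / x) atTop (𝓝 c)) (T : ℝ) :
    TendstoUniformlyOn (fun (n : ℕ) t => g (n * t) / n) (fun t => c * t) atTop (Icc 0 T) := by
  rw [Metric.tendstoUniformlyOn_iff]
  intro ε hε
  obtain ⟨η, hη, hηT⟩ : ∃ η > 0, η * T < ε / 2 :=
    ⟨ε / (2 * (|T| + 1)), by positivity, by
      rw [div_mul_eq_mul_div, div_lt_div_iff₀ (by positivity) two_pos]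
      nlinarith [le_abs_self T]⟩
  obtain ⟨C, hC⟩ := exists_abs_sub_mul_le_of_tendsto_div_s18 hg hg0 hlim hη
  filter_upwards [(tendsto_const_div_atTop_nhds_zero_nat C).eventually (gt_mem_nhds (half_pos hε)),
    eventually_gt_atTop 0] with n hCn hn t ht
  have hn' : (0 : ℝ) < n := Nat.cast_pos.2 hn
  have hsplit : g (n * t) / n - c * t = (g (n * t) - c * (n * t)) / n := by field_simp
  calc dist (c * t) (g (n * t) / n) = |g (n * t) - c * (n * t)| / n := by
        rw [dist_comm, Real.dist_eq, hsplit, abs_div, abs_of_pos hn']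
    _ ≤ (η * (n * t) + C) / n := by gcongr; exact hC _ (mul_nonneg hn'.le ht.1)
    _ = η * t + C / n := by field_simp
    _ < ε := by linarith [mul_le_mul_of_nonneg_left ht.2 hη.le]

end UniformScaling

lemma tendstoUniformlyOn_renewalCount_window {S : ℕ → ℝ} {μ : ℝ} (hμ : 0 < μ)
    (hSμ : Tendsto (fun k : ℕ => S k / k) atTop (𝓝 μ)) (T : ℝ) {h : ℝ} (hh : 0 < h) :
    TendstoUniformlyOn
      (fun (n : ℕ) t => ((renewalCount S (n * (t + h)) : ℝ) - renewalCount S (n * t)) / (n * h / μ))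
      (fun _ => 1) atTop (Icc 0 (T - h)) := by
  have hF := tendstoUniformlyOn_div_natCast_of_tendsto_div
    (fun _ _ hxy => Nat.cast_le.2 (renewalCount_monotone (tendsto_natCast_atTop_atTop.num hμ hSμ)
      hxy)) (Nat.cast_nonneg _) (tendsto_renewalCount_div hμ hSμ) T
  have hshift := (hF.comp (· + h)).mono fun t (ht : t ∈ Icc 0 (T - h)) =>
    (⟨by linarith [ht.1], by linarith [ht.2]⟩ : t + h ∈ Icc 0 T)
  have hwin := (uniformContinuous_div_const' (h / μ)).comp_tendstoUniformlyOn
    (hshift.fun_sub (hF.mono fun t ht => ⟨ht.1, by linarith [ht.2]⟩))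
  refine (hwin.congr_right fun t _ => ?_).congr (Eventually.of_forall fun n t _ => ?_)
  · simp only [Function.comp_apply]
    field_simp
    ring
  · simp only [Function.comp_apply]
    rw [← sub_div, div_div, mul_div_assoc]

lemma ae_tendsto_pSum_div {Ω : Type*} [MeasurableSpace Ω] {P : Measure Ω} {ξ : ℕ → Ω → ℝ}
    (hindep : Pairwise fun i j => IndepFun (ξ i) (ξ j) P)
    (hident : ∀ i, IdentDistrib (ξ i) (ξ 1) P P) (hint : Integrable (ξ 1) P) :
    ∀ᵐ ω ∂P, Tendsto (fun k : ℕ => pSum ξ k ω / k) atTop (𝓝 (∫ ω, ξ 1 ω ∂P)) := by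
  have hsl := strong_law_ae_real (fun i => ξ (i + 1)) hint
    (fun i j hij => hindep (by omega : i + 1 ≠ j + 1)) fun i => hident (i + 1)
  filter_upwards [hsl] with ω hω
  rw [zero_add] at hω
  refine hω.congr fun k => ?_
  rw [pSum, ← Finset.Ico_add_one_right_eq_Icc, Finset.sum_Ico_eq_sum_range, Nat.add_sub_cancel]
  simp only [add_comm 1]

theorem window_counts_tendstoUniformlyOn_ae_general
    {Ω : Type*} [MeasurableSpace Ω] (P : Measure Ω) [IsProbabilityMeasure P]
    (ξ : ℕ → Ω → ℝ)
    (hindep : iIndepFun ξ P)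
    (hident : ∀ i, IdentDistrib (ξ i) (ξ 1) P P)
    (hL4 : MemLp (ξ 1) 4 P)
    (μ : ℝ) (hμ : μ = ∫ ω, ξ 1 ω ∂P) (hμpos : 0 < μ)
    (T h : ℝ) (hh : 0 < h) :
    ∀ᵐ ω ∂P,
      TendstoUniformlyOn
        (fun (n : ℕ) (t : ℝ) =>
          ((cnt ξ ((n : ℝ) * (t + h)) ω : ℝ) - (cnt ξ ((n : ℝ) * t) ω : ℝ))
            / ((n : ℝ) * h / μ))
        (fun _ => 1) atTop (Set.Icc h (T - h)) ∧
      TendstoUniformlyOn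
        (fun (n : ℕ) (t : ℝ) =>
          ((cnt ξ ((n : ℝ) * t) ω : ℝ) - (cnt ξ ((n : ℝ) * (t - h)) ω : ℝ))
            / ((n : ℝ) * h / μ))
        (fun _ => 1) atTop (Set.Icc h (T - h)) := by
  subst hμ
  filter_upwards [ae_tendsto_pSum_div (fun i j hij => hindep.indepFun hij) hident
    (hL4.integrable (by norm_num))] with ω hω
  simp only [cnt_eq_renewalCount]
  have hwin := tendstoUniformlyOn_renewalCount_window hμpos hω T hh
  refine ⟨hwin.mono fun t ht => ⟨hh.le.trans ht.1, ht.2⟩, ?_⟩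
  have hback := (hwin.comp (· - h)).mono fun t (ht : t ∈ Icc h (T - h)) =>
    (⟨sub_nonneg.2 ht.1, by linarith [ht.2]⟩ : t - h ∈ Icc 0 (T - h))
  simpa only [Function.comp_def, sub_add_cancel] using hback

/-- uniform law of large numbers for the number of events in sliding
windows: for a renewal process with constant rate, almost surely
`sup_{t ∈ [h,T−h]} |(N_{n(t+h)} − N_{nt})/(nh/μ) − 1| → 0` and
`sup_{t ∈ [h,T−h]} |(N_{nt} − N_{n(t−h)})/(nh/μ) − 1| → 0` as `n → ∞`. -/
theorem window_counts_tendstoUniformlyOn_ae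
    {Ω : Type*} [MeasurableSpace Ω] (P : Measure Ω) [IsProbabilityMeasure P]
    (ξ : ℕ → Ω → ℝ) (hmeas : ∀ i, Measurable (ξ i))
    (hindep : iIndepFun ξ P)
    (hident : ∀ i, IdentDistrib (ξ i) (ξ 1) P P)
    (hpos : ∀ i, ∀ᵐ ω ∂P, 0 < ξ i ω)
    (hL4 : MemLp (ξ 1) 4 P)
    (μ : ℝ) (hμ : μ = ∫ ω, ξ 1 ω ∂P) (hμpos : 0 < μ)
    (T h : ℝ) (hT : 0 < T) (hh : 0 < h) (hhT : h ≤ T / 2) :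
    ∀ᵐ ω ∂P,
      TendstoUniformlyOn
        (fun (n : ℕ) (t : ℝ) =>
          ((cnt ξ ((n : ℝ) * (t + h)) ω : ℝ) - (cnt ξ ((n : ℝ) * t) ω : ℝ))
            / ((n : ℝ) * h / μ))
        (fun _ => 1) atTop (Set.Icc h (T - h)) ∧
      TendstoUniformlyOn
        (fun (n : ℕ) (t : ℝ) =>
          ((cnt ξ ((n : ℝ) * t) ω : ℝ) - (cnt ξ ((n : ℝ) * (t - h)) ω : ℝ))
            / ((n : ℝ) * h / μ))
        (fun _ => 1) atTop (Set.Icc h (T - h)) :=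
  window_counts_tendstoUniformlyOn_ae_general P ξ hindep hident hL4 μ hμ hμpos T h hh
end
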